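/- Every connected claw-free graph of order at least six admits a rigid orientation; that is, OD'^-(G) = 1. -/

import Mathlib

/-- An orientation of a simple graph `G`: a choice of exactly one direction for each edge. -/
structure GraphOrientation {V : Type*} (G : SimpleGraph V) where
  A : V → V → Prop
  consistent : ∀ u v, G.Adj u v ↔ A u v ∨ A v u
  asymm : ∀ u v, A u v → ¬ A v u

/-- `φ` is an automorphism of the graph `G`. -/
def IsGraphAut {V : Type*} (G : SimpleGraph V) (φ : Equiv.Perm V) : Prop :=
  ∀ u v, G.Adj (φ u) (φ v) ↔ G.Adj u v

/-- `φ` is an automorphism of the digraph with arc relation `A`. -/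
def IsDigraphAut {V : Type*} (A : V → V → Prop) (φ : Equiv.Perm V) : Prop :=
  ∀ u v, A (φ u) (φ v) ↔ A u v

/-- An edge colouring `c` of `G` is distinguishing if the only automorphism
preserving it is the identity. -/
def IsDistEdgeCol {V : Type*} (G : SimpleGraph V) {C : Type*} (c : Sym2 V → C) : Prop :=
  ∀ φ : Equiv.Perm V, IsGraphAut G φ →
    (∀ e ∈ G.edgeSet, c (Sym2.map φ e) = c e) → φ = 1

/-- The distinguishing index `D'(G)` of a graph. -/
noncomputable def D' {V : Type*} (G : SimpleGraph V) : ℕ :=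
  sInf {k | ∃ c : Sym2 V → Fin k, IsDistEdgeCol G c}

/-- An arc colouring `c` of the digraph with arc relation `A` is distinguishing if
the only automorphism preserving it is the identity. -/
def IsDistArcCol {V : Type*} (A : V → V → Prop) {C : Type*} (c : V → V → C) : Prop :=
  ∀ φ : Equiv.Perm V, IsDigraphAut A φ →
    (∀ u v, A u v → c (φ u) (φ v) = c u v) → φ = 1

/-- The distinguishing index of a digraph with arc relation `A`. -/
noncomputable def Dd' {V : Type*} (A : V → V → Prop) : ℕ :=
  sInf {k | ∃ c : V → V → Fin k, IsDistArcCol A c}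

/-- `OD'⁻(G)`: minimum of the distinguishing index over all orientations of `G`. -/
noncomputable def ODminus {V : Type*} (G : SimpleGraph V) : ℕ :=
  sInf {n | ∃ O : GraphOrientation G, Dd' O.A = n}

/-- `OD'⁺(G)`: maximum of the distinguishing index over all orientations of `G`. -/
noncomputable def ODplus {V : Type*} (G : SimpleGraph V) : ℕ :=
  sSup {n | ∃ O : GraphOrientation G, Dd' O.A = n}

/-- `G` is claw-free: no induced `K_{1,3}`. -/
def ClawFree {V : Type*} (G : SimpleGraph V) : Prop :=
  ∀ x a b c : V, G.Adj x a → G.Adj x b → G.Adj x c →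
    a ≠ b → a ≠ c → b ≠ c → (G.Adj a b ∨ G.Adj a c ∨ G.Adj b c)

/-- `G` is traceable: it has a Hamiltonian path. -/
def Traceable {V : Type*} [DecidableEq V] (G : SimpleGraph V) : Prop :=
  ∃ (u v : V) (p : G.Walk u v), p.IsHamiltonian

/-- `H` is empty or has a Hamiltonian path (i.e. admits a path cover by one path). -/
def TraceableOrEmpty {W : Type*} [DecidableEq W] (H : SimpleGraph W) : Prop :=
  IsEmpty W ∨ ∃ (u v : W) (p : H.Walk u v), p.IsHamiltonian

/-- `φ` is a twisted automorphism: some power of `φ` swaps the ends of an edge. -/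
def Twisted {V : Type*} (G : SimpleGraph V) (φ : Equiv.Perm V) : Prop :=
  ∃ (n : ℕ) (u v : V), 1 ≤ n ∧ G.Adj u v ∧ (φ ^ n) u = v ∧ (φ ^ n) v = u

/-- `H` has no cut-vertex. -/
def NoCutVtx {W : Type*} (H : SimpleGraph W) : Prop :=
  ∀ v : W, (H.induce {u | u ≠ v}).Preconnected


/-!
Rank the vertices and orient every edge from the lower to the higher rank. This orientation is
acyclic, so by well-founded induction an automorphism fixes all in-neighbours of a vertex `v`,
hence maps `v` to a vertex with the same in-neighbourhood; it is therefore the identity as soon as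
distinct vertices have distinct in-neighbourhoods.

Such a ranking is built by induction on the order, giving the top rank to a vertex `z` whose
removal leaves `G` connected; only the in-neighbourhood `N(z)` of `z` has to be told apart from
the others. If `z` has a neighbour `y` that is not a cut vertex of `G - z`, rank `G - z` with `y`
on top: then `y` is an in-neighbour of `z` and of no other vertex. Otherwise, take any neighbour
`y` of `z`, a cut vertex of `G - z`. A vertex `u` of `G - z` with in-neighbourhood `N(z)` is
adjacent to `y` but not to `z`, and `y` has a neighbour `c` outside the component of `u` in
`G - z - y`. As `u` and `c` are not adjacent, claw-freeness at `y` forces `c ∈ N(z)`, so `c` would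
be an in-neighbour of `u`.
-/

theorem Function.injective_of_injective_comp_compl_singleton {α β : Type*} {g : α → β} {z : α}
    (hg : Function.Injective (g ∘ ((↑) : ({z}ᶜ : Set α) → α)))
    (hz : ∀ v, v ≠ z → g v ≠ g z) : Function.Injective g := by
  intro u v h
  by_cases hu : u = z <;> by_cases hv : v = z
  · rw [hu, hv]
  · exact absurd (hu ▸ h).symm (hz v hv)
  · exact absurd (hv ▸ h) (hz u hu)
  · exact congrArg Subtype.val (@hg ⟨u, hu⟩ ⟨v, hv⟩ h)

theorem eq_one_of_isDigraphAut_of_wellFounded {V : Type*} {A : V → V → Prop}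
    (hwf : WellFounded A) (hinj : Function.Injective fun v => {y | A y v}) {φ : Equiv.Perm V}
    (hφ : IsDigraphAut A φ) : φ = 1 := by
  suffices h : ∀ v, φ v = v from Equiv.ext h
  intro v
  induction v using hwf.induction with
  | _ v ih =>
  refine hinj (Set.ext fun y => ⟨fun hy => ?_, fun hy => ?_⟩)
  · have hy' : A (φ.symm y) v := (hφ _ v).1 (by simpa using hy)
    have hfix : y = φ.symm y := by simpa using ih _ hy'
    rw [hfix]
    exact hy'
  · simpa [ih y hy] using (hφ y v).2 hy

namespace SimpleGraph

variable {V : Type*} (G : SimpleGraph V)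

def lowerNeighborSet (f : V → ℕ) (v : V) : Set V := {y | G.Adj y v ∧ f y < f v}

def IsSeparatingRank (f : V → ℕ) : Prop :=
  Function.Injective f ∧ Function.Injective (G.lowerNeighborSet f)

end SimpleGraph

def GraphOrientation.ofRank {V : Type*} (G : SimpleGraph V) {f : V → ℕ}
    (hf : Function.Injective f) : GraphOrientation G where
  A u v := G.Adj u v ∧ f u < f v
  consistent u v := by
    refine ⟨fun h => (lt_or_gt_of_ne (hf.ne h.ne)).imp (⟨h, ·⟩) (⟨h.symm, ·⟩), ?_⟩
    rintro (⟨h, -⟩ | ⟨h, -⟩)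
    exacts [h, h.symm]
  asymm _ _ h h' := h.2.asymm h'.2

namespace SimpleGraph

variable {V : Type*} {G : SimpleGraph V}

theorem IsSeparatingRank.isDigraphAut_eq_one {f : V → ℕ} (hf : G.IsSeparatingRank f)
    {φ : Equiv.Perm V} (hφ : IsDigraphAut (GraphOrientation.ofRank G hf.1).A φ) : φ = 1 :=
  eq_one_of_isDigraphAut_of_wellFounded
    (Subrelation.wf (fun h => h.2) (InvImage.wf f wellFounded_lt)) hf.2 hφ

theorem IsSeparatingRank.of_induce_compl_singleton {z : V} {F : V → ℕ}
    (hF : (G.induce {z}ᶜ).IsSeparatingRank (F ∘ (↑))) (hFz : ∀ v, v ≠ z → F v < F z)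
    (hz : ∀ u, (G.induce {z}ᶜ).lowerNeighborSet (F ∘ (↑)) u ≠
      {y : ({z}ᶜ : Set V) | G.Adj y z}) :
    G.IsSeparatingRank F := by
  have hlow (v : ({z}ᶜ : Set V)) :
      (↑) ⁻¹' G.lowerNeighborSet F v = (G.induce {z}ᶜ).lowerNeighborSet (F ∘ (↑)) v := rfl
  have hlow_z : (↑) ⁻¹' G.lowerNeighborSet F z = {y : ({z}ᶜ : Set V) | G.Adj y z} :=
    Set.ext fun y => ⟨And.left, fun h => ⟨h, hFz y y.2⟩⟩
  refine ⟨Function.injective_of_injective_comp_compl_singleton hF.1 fun v hv => (hFz v hv).ne,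
    Function.injective_of_injective_comp_compl_singleton (fun u v h => hF.2 ?_)
      fun v hv h => hz ⟨v, hv⟩ ?_⟩
  · rw [← hlow, ← hlow]
    exact congrArg _ h
  · rw [← hlow, ← hlow_z]
    exact congrArg _ h

theorem IsSeparatingRank.exists_extend [Finite V] {z : V} {f : ({z}ᶜ : Set V) → ℕ}
    (hf : (G.induce {z}ᶜ).IsSeparatingRank f)
    (hz : ∀ u, (G.induce {z}ᶜ).lowerNeighborSet f u ≠ {y : ({z}ᶜ : Set V) | G.Adj y z}) :
    ∃ F : V → ℕ, G.IsSeparatingRank F ∧ ∀ v, F v ≤ F z := by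
  classical
  obtain ⟨N, hN⟩ := Finite.bddAbove_range f
  let F : V → ℕ := fun v => if h : v = z then N + 1 else f ⟨v, h⟩
  have hFf : F ∘ (↑) = f := funext fun v => dif_neg v.2
  have hFz (v : V) (hv : v ≠ z) : F v < F z := by
    simpa [F, hv] using Nat.lt_succ_of_le (hN ⟨⟨v, hv⟩, rfl⟩)
  refine ⟨F, .of_induce_compl_singleton (hFf ▸ hf) hFz (hFf ▸ hz), fun v => ?_⟩
  by_cases hv : v = z
  · rw [hv]
  · exact (hFz v hv).le

theorem Preconnected.exists_adj_not_reachable_of_not_preconnected_induce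
    (hG : G.Preconnected) {y : V} (hy : ¬ (G.induce {y}ᶜ).Preconnected) (u : ({y}ᶜ : Set V)) :
    ∃ c : ({y}ᶜ : Set V), G.Adj y c ∧ ¬ (G.induce {y}ᶜ).Reachable u c := by
  obtain ⟨c₀, hc₀⟩ : ∃ c₀, ¬ (G.induce {y}ᶜ).Reachable u c₀ := by
    by_contra! h
    exact hy fun a b => (h a).symm.trans (h b)
  obtain ⟨p⟩ := hG u c₀
  obtain ⟨d, -, hd₁, hd₂⟩ := p.exists_boundary_dart
    {x | ∀ hx : x ≠ y, (G.induce {y}ᶜ).Reachable u ⟨x, hx⟩} (fun _ => Reachable.refl _)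
    (fun h => hc₀ (h c₀.2))
  obtain ⟨hcy, hc⟩ := not_forall.1 hd₂
  have hd : d.fst = y := by
    by_contra hne
    exact hc ((hd₁ hne).trans (Adj.reachable (d.adj : G.Adj d.fst d.snd)))
  exact ⟨⟨d.snd, hcy⟩, hd ▸ d.adj, hc⟩

end SimpleGraph

namespace ClawFree

open SimpleGraph

variable {V : Type*} {G : SimpleGraph V}

theorem induce (hG : ClawFree G) (s : Set V) : ClawFree (G.induce s) :=
  fun x a b c hxa hxb hxc hab hac hbc =>
    hG x a b c hxa hxb hxc (Subtype.val_injective.ne hab) (Subtype.val_injective.ne hac)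
      (Subtype.val_injective.ne hbc)

theorem exists_adj_not_adj (hcf : ClawFree G) {s : Set V} {z : V} (hz : z ∉ s)
    (hs : (G.induce s).Preconnected) {y : s} (hzy : G.Adj z y)
    (hy : ¬ ((G.induce s).induce {y}ᶜ).Preconnected) {u : s} (hzu : ¬ G.Adj z u) :
    ∃ c : s, G.Adj z c ∧ ¬ G.Adj u c := by
  by_cases huy : G.Adj u y
  · obtain ⟨⟨c, hcy⟩, hyc, hc⟩ :=
      hs.exists_adj_not_reachable_of_not_preconnected_induce hy ⟨u, fun h => huy.ne (by rw [h])⟩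
    have huc : ¬ G.Adj u c := fun h => hc (Adj.reachable (G := (G.induce s).induce {y}ᶜ) h)
    have huc' : (u : V) ≠ c := fun h => hc (by obtain rfl := Subtype.ext h; rfl)
    have hz' (x : s) : z ≠ x := fun h => hz (h ▸ x.2)
    rcases hcf y z u c hzy.symm huy.symm hyc (hz' u) (hz' c) huc' with h | h | h
    exacts [absurd h hzu, ⟨c, h, huc⟩, absurd h huc]
  · exact ⟨y, hzy, huy⟩

theorem lowerNeighborSet_ne (hcf : ClawFree G) {s : Set V} {z : V} (hz : z ∉ s)
    (hs : (G.induce s).Preconnected) {y : s} (hzy : G.Adj z y)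
    (hy : ¬ ((G.induce s).induce {y}ᶜ).Preconnected) (f : s → ℕ) (u : s) :
    (G.induce s).lowerNeighborSet f u ≠ {x : s | G.Adj x z} := by
  intro h
  have hzu : ¬ G.Adj z u := by
    intro hzu
    have hu : u ∈ {x : s | G.Adj x z} := hzu.symm
    rw [← h] at hu
    exact lt_irrefl _ hu.2
  obtain ⟨c, hzc, huc⟩ := hcf.exists_adj_not_adj hz hs hzy hy hzu
  have hc : c ∈ {x : s | G.Adj x z} := hzc.symm
  rw [← h] at hc
  exact huc hc.1.symm

theorem exists_isSeparatingRank [Finite V] (hcf : ClawFree G) (hG : G.Preconnected) (z : V)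
    (hz : (G.induce {z}ᶜ).Preconnected) :
    ∃ f : V → ℕ, G.IsSeparatingRank f ∧ ∀ v, f v ≤ f z := by
  induction h : Nat.card V using Nat.strong_induction_on generalizing V with
  | _ n ih =>
  subst h
  rcases isEmpty_or_nonempty ({z}ᶜ : Set V) with hV | hV
  · have hVz (v : V) : v = z := by_contra fun h => hV.false ⟨v, h⟩
    exact ⟨0, ⟨fun u v _ => (hVz u).trans (hVz v).symm,
      fun u v _ => (hVz u).trans (hVz v).symm⟩, fun _ => le_rfl⟩
  have IH := fun y hy =>
    ih _ (Finite.card_subtype_lt (x := z) (by simp)) (hcf.induce _) hz y hy rfl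
  by_cases hnoncut : ∃ y : ({z}ᶜ : Set V), G.Adj y z ∧ ((G.induce {z}ᶜ).induce {y}ᶜ).Preconnected
  · obtain ⟨y, hyz, hy⟩ := hnoncut
    obtain ⟨f, hf, hfy⟩ := IH y hy
    refine hf.exists_extend fun u h => ?_
    have : y ∈ (G.induce {z}ᶜ).lowerNeighborSet f u := h ▸ hyz
    exact (hfy u).not_gt this.2
  · obtain ⟨y, hy⟩ := Connected.exists_preconnected_induce_compl_singleton_of_finite ⟨hz⟩
    obtain ⟨f, hf, -⟩ := IH y hy
    have : Nontrivial V := nontrivial_of_ne _ _ hV.some.2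
    obtain ⟨y₀, hzy₀⟩ := hG.exists_adj_of_nontrivial z
    exact hf.exists_extend (hcf.lowerNeighborSet_ne (by simp) hz (y := ⟨y₀, hzy₀.ne'⟩) hzy₀
      (fun h => hnoncut ⟨_, hzy₀.symm, h⟩) f)

end ClawFree

section DistinguishingIndex

variable {V : Type*}

theorem one_le_Dd' [Nonempty V] {A : V → V → Prop} {k : ℕ} {c : V → V → Fin k}
    (hc : IsDistArcCol A c) : 1 ≤ Dd' A := by
  refine Nat.one_le_iff_ne_zero.2 fun h => ?_
  rcases Nat.sInf_eq_zero.1 h with ⟨c₀, -⟩ | h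
  · exact (c₀ (Classical.arbitrary V) (Classical.arbitrary V)).elim0
  · exact h.subset ⟨c, hc⟩

theorem Dd'_eq_one [Nonempty V] {A : V → V → Prop}
    (hA : ∀ φ : Equiv.Perm V, IsDigraphAut A φ → φ = 1) : Dd' A = 1 :=
  le_antisymm (Nat.sInf_le ⟨fun _ _ => 0, fun φ hφ _ => hA φ hφ⟩)
    (one_le_Dd' (c := fun _ _ => (0 : Fin 1)) fun φ hφ _ => hA φ hφ)

theorem GraphOrientation.isDistArcCol_equivFin [Fintype V] {G : SimpleGraph V}
    (hG : G.Connected) (O : GraphOrientation G) :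
    IsDistArcCol O.A fun u v => Fintype.equivFin (V × V) (u, v) := by
  intro φ _ hc
  have hfix (u v : V) (huv : G.Adj u v) : φ u = u := by
    rcases (O.consistent u v).1 huv with h | h
    · exact congrArg Prod.fst ((Fintype.equivFin _).injective (hc u v h))
    · exact congrArg Prod.snd ((Fintype.equivFin _).injective (hc v u h))
  refine Equiv.ext fun v => by_contra fun hv => ?_
  have : Nontrivial V := nontrivial_of_ne _ _ hv
  obtain ⟨w, hvw⟩ := hG.preconnected.exists_adj_of_nontrivial v
  exact hv (hfix v w hvw)

theorem ODminus_eq_one [Fintype V] {G : SimpleGraph V} (hG : G.Connected)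
    {O : GraphOrientation G} (hO : ∀ φ : Equiv.Perm V, IsDigraphAut O.A φ → φ = 1) :
    ODminus G = 1 := by
  have := hG.nonempty
  refine le_antisymm (Nat.sInf_le ⟨O, Dd'_eq_one hO⟩) (le_csInf ⟨1, O, Dd'_eq_one hO⟩ ?_)
  rintro _ ⟨O', rfl⟩
  exact one_le_Dd' (O'.isDistArcCol_equivFin hG)

end DistinguishingIndex

theorem stmt15_general {V : Type*} [Fintype V] (G : SimpleGraph V)
    (hconn : G.Connected) (hcf : ClawFree G) :
    (∃ O : GraphOrientation G, ∀ φ : Equiv.Perm V, IsDigraphAut O.A φ → φ = 1) ∧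
      ODminus G = 1 := by
  obtain ⟨z, hz⟩ := hconn.exists_preconnected_induce_compl_singleton_of_finite
  obtain ⟨f, hf, -⟩ := hcf.exists_isSeparatingRank hconn.preconnected z hz
  have hrigid : ∀ φ, IsDigraphAut (GraphOrientation.ofRank G hf.1).A φ → φ = 1 :=
    fun _ => hf.isDigraphAut_eq_one
  exact ⟨⟨_, hrigid⟩, ODminus_eq_one hconn hrigid⟩

theorem stmt15 {V : Type*} [Fintype V] (G : SimpleGraph V)
    (hconn : G.Connected) (hcf : ClawFree G) (hcard : 6 ≤ Fintype.card V) :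
    (∃ O : GraphOrientation G, ∀ φ : Equiv.Perm V, IsDigraphAut O.A φ → φ = 1) ∧
      ODminus G = 1 :=
  stmt15_general G hconn hcf
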